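/- arXiv:1705.06555 — 2 statements merged into one kernel-verified Lean document; each statement's English description precedes it below -/
import Mathlib

section
/- If S ⊆ T are Cuntz semigroups (S a Cuntz subsemigroup of T, with the inherited order and suprema) such that S is countably based and T is algebraic, then there exists a countably based, algebraic Cuntz semigroup S' with S ⊆ S' ⊆ T, where the inclusion S' ↪ T preserves the Cuntz semigroup structure. -/
/-- `x` is compactly contained in `y`: whenever an increasing sequence has a supremum
dominating `y`, some term dominates `x`. -/
def CC {M : Type*} [Preorder M] (x y : M) : Prop :=
  ∀ f : ℕ → M, Monotone f → ∀ s : M, IsLUB (Set.range f) s → y ≤ s → ∃ n, x ≤ f n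

/-- An element is compact if it is compactly contained in itself. -/
def IsCpt {M : Type*} [Preorder M] (x : M) : Prop := CC x x

/-- A Cuntz semigroup: a positively ordered monoid with suprema of increasing sequences,
rapidly increasing approximations, and additivity of suprema and of `CC`. -/
class CuSemigroup (S : Type*) extends AddCommMonoid S, PartialOrder S where
  add_le_add_left : ∀ a b : S, a ≤ b → ∀ c : S, c + a ≤ c + b
  zero_le' : ∀ x : S, 0 ≤ x
  seqSup : ∀ f : ℕ → S, Monotone f → ∃ s : S, IsLUB (Set.range f) s
  rapid : ∀ x : S, ∃ f : ℕ → S, Monotone f ∧ (∀ n, CC (f n) (f (n + 1))) ∧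
    IsLUB (Set.range f) x
  supAdd : ∀ f g : ℕ → S, Monotone f → Monotone g → ∀ a b : S, IsLUB (Set.range f) a →
    IsLUB (Set.range g) b → IsLUB (Set.range fun n => f n + g n) (a + b)
  ccAdd : ∀ x x' y y' : S, CC x x' → CC y y' → CC (x + y) (x' + y')

/-- A subset of a Cuntz semigroup which is a Cuntz subsemigroup: it contains `0`, is closed
under addition, and is closed under suprema of increasing sequences (so that the inclusion
preserves the Cuntz semigroup structure). -/
def IsSubCu {T : Type*} [CuSemigroup T] (P : Set T) : Prop :=
  (0 : T) ∈ P ∧ (∀ x ∈ P, ∀ y ∈ P, x + y ∈ P) ∧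
    ∀ f : ℕ → T, Monotone f → (∀ n, f n ∈ P) → ∀ s : T, IsLUB (Set.range f) s → s ∈ P

/-!
Let `K` be the additive submonoid generated by compact approximants (which exist since `T` is
algebraic) of the countably many basis elements of `S`; it is countable and consists of compact
elements. Take `S'` to be the set of suprema of increasing sequences in `K`. The key point is
that `S'` is closed under suprema of increasing sequences: if `sᵢ = sup_k vᵢₖ` with `vᵢₖ ∈ K`,
compactness makes the family `(vᵢₖ)` directed, and a cofinal increasing sequence extracted from
it has supremum `sup sᵢ`.
-/

open Set

section Preorder

variable {M : Type*} [Preorder M]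

def seqSups (K : Set M) : Set M :=
  {x | ∃ f : ℕ → M, Monotone f ∧ (∀ n, f n ∈ K) ∧ IsLUB (range f) x}

lemma seqSups_mono {K L : Set M} (h : K ⊆ L) : seqSups K ⊆ seqSups L :=
  fun _ ⟨f, hf, hfK, hfx⟩ => ⟨f, hf, fun n => h (hfK n), hfx⟩

lemma subset_seqSups (K : Set M) : K ⊆ seqSups K := fun b hb =>
  ⟨fun _ => b, monotone_const, fun _ => hb, by rw [range_const]; exact isLUB_singleton⟩

lemma directed_of_isCpt {u : ℕ → M} (hu : Monotone u) {v : ℕ → ℕ → M}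
    (hv : ∀ n, Monotone (v n)) (hvcpt : ∀ n k, IsCpt (v n k))
    (hvu : ∀ n, IsLUB (range (v n)) (u n)) :
    Directed (· ≤ ·) fun p : ℕ × ℕ => v p.1 p.2 := by
  rintro ⟨m, k⟩ ⟨n, l⟩
  have hle : ∀ i j, i ≤ max m n → v i j ≤ u (max m n) :=
    fun i j hi => ((hvu i).1 ⟨j, rfl⟩).trans (hu hi)
  obtain ⟨a, ha⟩ := hvcpt m k _ (hv _) _ (hvu _) (hle m k (le_max_left m n))
  obtain ⟨b, hb⟩ := hvcpt n l _ (hv _) _ (hvu _) (hle n l (le_max_right m n))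
  exact ⟨(max m n, max a b), ha.trans (hv _ (le_max_left a b)),
    hb.trans (hv _ (le_max_right a b))⟩

lemma seqSups_seqSups_subset {K : Set M} (hK : ∀ b ∈ K, IsCpt b) :
    seqSups (seqSups K) ⊆ seqSups K := by
  rintro s ⟨u, hu, huK, hus⟩
  choose v hv hvK hvu using huK
  have hdir := directed_of_isCpt hu hv (fun n k => hK _ (hvK n k)) hvu
  refine ⟨_, hdir.sequence_mono, fun j => hvK _ _, ?_, fun w hw => hus.2 ?_⟩
  · rintro _ ⟨j, rfl⟩
    exact ((hvu _).1 ⟨_, rfl⟩).trans (hus.1 ⟨_, rfl⟩)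
  · rintro _ ⟨n, rfl⟩
    refine (hvu n).2 ?_
    rintro _ ⟨k, rfl⟩
    exact (hdir.le_sequence (n, k)).trans (hw ⟨_, rfl⟩)

end Preorder

lemma Set.Countable.addSubmonoidClosure {M : Type*} [AddMonoid M] {s : Set M}
    (hs : s.Countable) : (AddSubmonoid.closure s : Set M).Countable := by
  have := hs.to_subtype
  rw [AddSubmonoid.closure_eq_image_sum, ← range_list_map_coe, ← range_comp]
  exact countable_range _

section CuSemigroup

variable {T : Type*} [CuSemigroup T]

instance CuSemigroup.toIsOrderedAddMonoid : IsOrderedAddMonoid T where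
  add_le_add_left a b h c := by
    simpa only [add_comm _ c] using CuSemigroup.add_le_add_left a b h c

def cptAddSubmonoid (T : Type*) [CuSemigroup T] : AddSubmonoid T where
  carrier := {x | IsCpt x}
  zero_mem' _ _ _ _ _ := ⟨0, CuSemigroup.zero_le' _⟩
  add_mem' hx hy := CuSemigroup.ccAdd _ _ _ _ hx hy

lemma isSubCu_seqSups {K : AddSubmonoid T} (hK : ∀ b ∈ K, IsCpt b) :
    IsSubCu (seqSups (K : Set T)) := by
  refine ⟨subset_seqSups _ K.zero_mem, ?_, fun f hf hfK s hs => ?_⟩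
  · rintro x ⟨e, he, heK, hex⟩ y ⟨d, hd, hdK, hdy⟩
    exact ⟨e + d, he.add hd, fun n => K.add_mem (heK n) (hdK n),
      CuSemigroup.supAdd e d he hd x y hex hdy⟩
  · exact seqSups_seqSups_subset hK ⟨f, hf, hfK, hs⟩

end CuSemigroup

theorem stmt7_general {T : Type*} [CuSemigroup T]
    (halg : ∀ x : T, ∃ f : ℕ → T, Monotone f ∧ (∀ n, IsCpt (f n)) ∧ IsLUB (Set.range f) x)
    (S : Set T)
    (B : Set T) (hBc : B.Countable)
    (hB : ∀ x ∈ S, ∃ f : ℕ → T, Monotone f ∧ (∀ n, f n ∈ B) ∧ IsLUB (Set.range f) x) :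
    ∃ S' : Set T, S ⊆ S' ∧ IsSubCu S' ∧
      ∃ B' : Set T, B' ⊆ S' ∧ B'.Countable ∧ (∀ b ∈ B', IsCpt b) ∧
        ∀ x ∈ S', ∃ f : ℕ → T, Monotone f ∧ (∀ n, f n ∈ B') ∧ IsLUB (Set.range f) x := by
  choose c hc hccpt hcx using halg
  set K := AddSubmonoid.closure (⋃ b ∈ B, range (c b))
  have hKcpt : ∀ k ∈ K, IsCpt k := AddSubmonoid.closure_le (S := cptAddSubmonoid T).2 <| by
    simp only [iUnion_subset_iff, range_subset_iff]
    exact fun b _ n => hccpt b n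
  have hBK : B ⊆ seqSups (K : Set T) := fun b hb =>
    ⟨c b, hc b, fun n => AddSubmonoid.subset_closure (mem_biUnion hb ⟨n, rfl⟩), hcx b⟩
  have hSK : S ⊆ seqSups (K : Set T) := fun x hx =>
    seqSups_seqSups_subset hKcpt (seqSups_mono hBK (hB x hx))
  exact ⟨_, hSK, isSubCu_seqSups hKcpt, K, subset_seqSups _,
    (hBc.biUnion fun b _ => countable_range (c b)).addSubmonoidClosure, hKcpt, fun _ hx => hx⟩

/-- If `S ⊆ T` are Cuntz semigroups with `S` countably based and `T` algebraic, there is a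
countably based, algebraic Cuntz semigroup `S'` with `S ⊆ S' ⊆ T` (countably based and
algebraic being witnessed by a countable basis consisting of compact elements). -/
theorem stmt7 {T : Type*} [CuSemigroup T]
    (halg : ∀ x : T, ∃ f : ℕ → T, Monotone f ∧ (∀ n, IsCpt (f n)) ∧ IsLUB (Set.range f) x)
    (S : Set T) (hS : IsSubCu S)
    (B : Set T) (hBS : B ⊆ S) (hBc : B.Countable)
    (hB : ∀ x ∈ S, ∃ f : ℕ → T, Monotone f ∧ (∀ n, f n ∈ B) ∧ IsLUB (Set.range f) x) :
    ∃ S' : Set T, S ⊆ S' ∧ IsSubCu S' ∧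
      ∃ B' : Set T, B' ⊆ S' ∧ B'.Countable ∧ (∀ b ∈ B', IsCpt b) ∧
        ∀ x ∈ S', ∃ f : ℕ → T, Monotone f ∧ (∀ n, f n ∈ B') ∧ IsLUB (Set.range f) x :=
  stmt7_general halg S B hBc hB
end

section
/- Let S be a Cuntz semigroup and let S' be the subset of S consisting of suprema of increasing sequences of compact elements. If x, y ∈ S' (that is, x and y are each suprema of increasing sequences of compact elements) and x ≪ y relative to S', then x ≪ y relative to S. -/
/-- Compact containment relative to a subset `P`. -/
def CCrel {M : Type*} [Preorder M] (P : Set M) (x y : M) : Prop :=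
  ∀ f : ℕ → M, Monotone f → (∀ n, f n ∈ P) → ∀ s : M, s ∈ P → IsLUB (Set.range f) s →
    y ≤ s → ∃ n, x ≤ f n

/-- If `x, y` are suprema of increasing sequences of compact elements and `x ≪ y` holds
relative to the set `S'` of all such suprema, then `x ≪ y` holds in `S`. -/
theorem stmt9 {S : Type*} [CuSemigroup S]
    (S' : Set S)
    (hS' : S' = {z : S | ∃ f : ℕ → S, Monotone f ∧ (∀ n, IsCpt (f n)) ∧ IsLUB (Set.range f) z})
    (x y : S) (hx : x ∈ S') (hy : y ∈ S')
    (h : CCrel S' x y) : CC x y := by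
  subst hS'
  obtain ⟨g, hgmono, hgcpt, hglub⟩ := hy
  -- every compact element lies in S' (constant sequence)
  have hmem : ∀ n, g n ∈ {z : S | ∃ f : ℕ → S, Monotone f ∧ (∀ n, IsCpt (f n)) ∧
      IsLUB (Set.range f) z} := by
    intro n
    refine ⟨fun _ => g n, monotone_const, fun _ => hgcpt n, ?_⟩
    simpa [Set.range_const] using isLUB_singleton (a := g n)
  obtain ⟨k, hxk⟩ := h g hgmono hmem y ⟨g, hgmono, hgcpt, hglub⟩ hglub le_rfl
  intro f hf s hs hys
  have hgk : g k ≤ s := le_trans (hglub.1 ⟨k, rfl⟩) hys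
  obtain ⟨n, hn⟩ := hgcpt k f hf s hs hgk
  exact ⟨n, le_trans hxk hn⟩
end
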